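/- Under the hypotheses of the preceding abstract setting, the Lie algebra h = span{Id, a(S^k ζ), a*(S^k ζ), N, Λ, Δ_G, Δ_G(S) : k ≥ 0} is solvable: h⁽¹⁾ ⊆ span{Id, a(S^k ζ), a*(S^k ζ), Δ_G, Δ_G(S) : k ≥ 0}, h⁽²⁾ ⊆ span{Id, a(S^k ζ) : k ≥ 0}, and h⁽³⁾ = 0. -/

import Mathlib

/-!
Brackets are bilinear, so the span of the brackets of two spans is spanned by the brackets of
their generators, and every step of the derived series can be read off the commutation relations
on generators. These relations exhibit a filtration: no bracket of generators of `h` involves `N`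
or `Λ`; brackets among `Id`, `a(Sᵏζ)`, `a*(Sᵏζ)`, `Δ_G`, `Δ_G(S)` only produce multiples of `Id`
(from `[a, a*]`) and of annihilators (from `[a*, Δ_G]`); and `Id` together with the annihilators
commute.
-/

open Submodule Set

theorem span_image2_lie_le {R L : Type*} [CommRing R] [LieRing L] [LieAlgebra R L]
    {V W : Submodule R L} {s t : Set L} {M : Submodule R L}
    (hV : V ≤ span R s) (hW : W ≤ span R t) (h : ∀ x ∈ s, ∀ y ∈ t, ⁅x, y⁆ ∈ M) :
    span R (image2 (fun x y => ⁅x, y⁆) (V : Set L) (W : Set L)) ≤ M := by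
  rw [span_le]
  rintro _ ⟨x, hx, y, hy, rfl⟩
  have hxy := apply_mem_map₂ (LieModule.toEnd R L L : L →ₗ[R] Module.End R L) (hV hx) (hW hy)
  rw [map₂_span_span] at hxy
  exact span_le.2 (image2_subset_iff.2 h) hxy

theorem Ring.one_lie {A : Type*} [Ring A] (x : A) : ⁅(1 : A), x⁆ = 0 := (Commute.one_left x).lie_eq

theorem Ring.lie_one {A : Type*} [Ring A] (x : A) : ⁅x, (1 : A)⁆ = 0 := (Commute.one_right x).lie_eq

section PowOrbit

variable {R E A : Type*} [Semiring R] [AddCommMonoid E] [Module R E]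

def powOrbit (f : E → A) (S : Module.End R E) (ζ : E) : Set A :=
  range fun k : ℕ => f ((S ^ k) ζ)

variable (f : E → A) (S : Module.End R E) (ζ : E)

theorem apply_pow_mem_powOrbit (k : ℕ) : f ((S ^ k) ζ) ∈ powOrbit f S ζ := ⟨k, rfl⟩

theorem apply_apply_pow_mem_powOrbit (k : ℕ) : f (S ((S ^ k) ζ)) ∈ powOrbit f S ζ :=
  ⟨k + 1, by simp only [pow_succ', Module.End.mul_apply]⟩

end PowOrbit

structure WhiteNoiseRelations {R E A : Type*} [CommRing R] [AddCommGroup E] [Module R E] [Ring A]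
    [Algebra R A] (B : E →ₗ[R] E →ₗ[R] R) (S : E →ₗ[R] E) (a a' : E →ₗ[R] A)
    (N Λ ΔG ΔGS : A) : Prop where
  a_lie_a' : ∀ ξ η, ⁅a ξ, a' η⁆ = B ξ η • (1 : A)
  a_lie_N : ∀ ξ, ⁅a ξ, N⁆ = a ξ
  a'_lie_N : ∀ ξ, ⁅a' ξ, N⁆ = -a' ξ
  N_lie_Λ : ⁅N, Λ⁆ = 0
  a'_lie_Λ : ∀ ξ, ⁅a' ξ, Λ⁆ = a' (S ξ)
  a_lie_Λ : ∀ ξ, ⁅a ξ, Λ⁆ = -a (S ξ)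
  a_lie_ΔG : ∀ ξ, ⁅a ξ, ΔG⁆ = 0
  a'_lie_ΔG : ∀ ξ, ⁅a' ξ, ΔG⁆ = -((2 : R) • a ξ)
  a'_lie_ΔGS : ∀ ξ, ⁅a' ξ, ΔGS⁆ = 0
  a_lie_ΔGS : ∀ ξ, ⁅a ξ, ΔGS⁆ = 0
  ΔG_lie_N : ⁅ΔG, N⁆ = (2 : R) • ΔG
  N_lie_ΔGS : ⁅N, ΔGS⁆ = -((2 : R) • ΔGS)
  ΔG_lie_ΔGS : ⁅ΔG, ΔGS⁆ = 0
  ΔG_lie_Λ : ⁅ΔG, Λ⁆ = (2 : R) • ΔGS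
  ΔGS_lie_Λ : ⁅ΔGS, Λ⁆ = 0
  a_lie_a : ∀ ξ η, ⁅a ξ, a η⁆ = 0
  a'_lie_a' : ∀ ξ η, ⁅a' ξ, a' η⁆ = 0

namespace WhiteNoiseRelations

attribute [local instance] LieRing.ofAssociativeRing

variable {R E A : Type*} [CommRing R] [AddCommGroup E] [Module R E] [Ring A] [Algebra R A]
  {B : E →ₗ[R] E →ₗ[R] R} {S : E →ₗ[R] E} {a a' : E →ₗ[R] A} {N Λ ΔG ΔGS : A}

theorem a'_lie_a (h : WhiteNoiseRelations B S a a' N Λ ΔG ΔGS) (ξ η : E) :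
    ⁅a' η, a ξ⁆ = -(B ξ η • (1 : A)) := by
  rw [← lie_skew, h.a_lie_a']

theorem N_lie_a (h : WhiteNoiseRelations B S a a' N Λ ΔG ΔGS) (ξ : E) : ⁅N, a ξ⁆ = -a ξ := by
  rw [← lie_skew, h.a_lie_N]

theorem N_lie_a' (h : WhiteNoiseRelations B S a a' N Λ ΔG ΔGS) (ξ : E) : ⁅N, a' ξ⁆ = a' ξ := by
  rw [← lie_skew, h.a'_lie_N, neg_neg]

theorem Λ_lie_N (h : WhiteNoiseRelations B S a a' N Λ ΔG ΔGS) : ⁅Λ, N⁆ = 0 := by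
  rw [← lie_skew, h.N_lie_Λ, neg_zero]

theorem Λ_lie_a' (h : WhiteNoiseRelations B S a a' N Λ ΔG ΔGS) (ξ : E) :
    ⁅Λ, a' ξ⁆ = -a' (S ξ) := by
  rw [← lie_skew, h.a'_lie_Λ]

theorem Λ_lie_a (h : WhiteNoiseRelations B S a a' N Λ ΔG ΔGS) (ξ : E) : ⁅Λ, a ξ⁆ = a (S ξ) := by
  rw [← lie_skew, h.a_lie_Λ, neg_neg]

theorem ΔG_lie_a (h : WhiteNoiseRelations B S a a' N Λ ΔG ΔGS) (ξ : E) : ⁅ΔG, a ξ⁆ = 0 := by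
  rw [← lie_skew, h.a_lie_ΔG, neg_zero]

theorem ΔG_lie_a' (h : WhiteNoiseRelations B S a a' N Λ ΔG ΔGS) (ξ : E) :
    ⁅ΔG, a' ξ⁆ = (2 : R) • a ξ := by
  rw [← lie_skew, h.a'_lie_ΔG, neg_neg]

theorem ΔGS_lie_a' (h : WhiteNoiseRelations B S a a' N Λ ΔG ΔGS) (ξ : E) : ⁅ΔGS, a' ξ⁆ = 0 := by
  rw [← lie_skew, h.a'_lie_ΔGS, neg_zero]

theorem ΔGS_lie_a (h : WhiteNoiseRelations B S a a' N Λ ΔG ΔGS) (ξ : E) : ⁅ΔGS, a ξ⁆ = 0 := by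
  rw [← lie_skew, h.a_lie_ΔGS, neg_zero]

theorem N_lie_ΔG (h : WhiteNoiseRelations B S a a' N Λ ΔG ΔGS) : ⁅N, ΔG⁆ = -((2 : R) • ΔG) := by
  rw [← lie_skew, h.ΔG_lie_N]

theorem ΔGS_lie_N (h : WhiteNoiseRelations B S a a' N Λ ΔG ΔGS) : ⁅ΔGS, N⁆ = (2 : R) • ΔGS := by
  rw [← lie_skew, h.N_lie_ΔGS, neg_neg]

theorem ΔGS_lie_ΔG (h : WhiteNoiseRelations B S a a' N Λ ΔG ΔGS) : ⁅ΔGS, ΔG⁆ = 0 := by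
  rw [← lie_skew, h.ΔG_lie_ΔGS, neg_zero]

theorem Λ_lie_ΔG (h : WhiteNoiseRelations B S a a' N Λ ΔG ΔGS) : ⁅Λ, ΔG⁆ = -((2 : R) • ΔGS) := by
  rw [← lie_skew, h.ΔG_lie_Λ]

theorem Λ_lie_ΔGS (h : WhiteNoiseRelations B S a a' N Λ ΔG ΔGS) : ⁅Λ, ΔGS⁆ = 0 := by
  rw [← lie_skew, h.ΔGS_lie_Λ, neg_zero]

variable (ζ : E)

theorem lie_eq_zero_of_mem_annihilators (h : WhiteNoiseRelations B S a a' N Λ ΔG ΔGS) :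
    ∀ x ∈ ({1} : Set A) ∪ powOrbit a S ζ, ∀ y ∈ ({1} : Set A) ∪ powOrbit a S ζ, ⁅x, y⁆ = 0 := by
  rintro _ (rfl | ⟨k, rfl⟩) _ (rfl | ⟨j, rfl⟩) <;>
    simp only [Ring.one_lie, Ring.lie_one, h.a_lie_a]

theorem lie_mem_span_annihilators (h : WhiteNoiseRelations B S a a' N Λ ΔG ΔGS) :
    ∀ x ∈ ({1, ΔG, ΔGS} : Set A) ∪ powOrbit a S ζ ∪ powOrbit a' S ζ,
    ∀ y ∈ ({1, ΔG, ΔGS} : Set A) ∪ powOrbit a S ζ ∪ powOrbit a' S ζ,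
    ⁅x, y⁆ ∈ span R (({1} : Set A) ∪ powOrbit a S ζ) := by
  intro x hx y hy
  simp only [mem_union, mem_insert_iff, mem_singleton_iff] at hx hy
  rcases hx with ((rfl | rfl | rfl) | ⟨k, rfl⟩) | ⟨k, rfl⟩ <;>
    rcases hy with ((rfl | rfl | rfl) | ⟨j, rfl⟩) | ⟨j, rfl⟩ <;>
    simp only [Ring.one_lie, Ring.lie_one, lie_self, h.a_lie_a', h.a'_lie_a, h.a_lie_a,
      h.a'_lie_a', h.a_lie_ΔG, h.ΔG_lie_a, h.a'_lie_ΔG, h.ΔG_lie_a', h.a_lie_ΔGS, h.ΔGS_lie_a,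
      h.a'_lie_ΔGS, h.ΔGS_lie_a', h.ΔG_lie_ΔGS, h.ΔGS_lie_ΔG, neg_mem_iff] <;>
    first
      | exact zero_mem _
      | exact smul_mem _ _ (subset_span (by simp [apply_pow_mem_powOrbit]))

theorem lie_mem_span_fields_laplacians (h : WhiteNoiseRelations B S a a' N Λ ΔG ΔGS) :
    ∀ x ∈ ({1, N, Λ, ΔG, ΔGS} : Set A) ∪ powOrbit a S ζ ∪ powOrbit a' S ζ,
    ∀ y ∈ ({1, N, Λ, ΔG, ΔGS} : Set A) ∪ powOrbit a S ζ ∪ powOrbit a' S ζ,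
    ⁅x, y⁆ ∈ span R (({1, ΔG, ΔGS} : Set A) ∪ powOrbit a S ζ ∪ powOrbit a' S ζ) := by
  intro x hx y hy
  simp only [mem_union, mem_insert_iff, mem_singleton_iff] at hx hy
  rcases hx with ((rfl | rfl | rfl | rfl | rfl) | ⟨k, rfl⟩) | ⟨k, rfl⟩ <;>
    rcases hy with ((rfl | rfl | rfl | rfl | rfl) | ⟨j, rfl⟩) | ⟨j, rfl⟩ <;>
    simp only [Ring.one_lie, Ring.lie_one, lie_self, h.a_lie_a', h.a'_lie_a, h.a_lie_a,
      h.a'_lie_a', h.a_lie_N, h.N_lie_a, h.a'_lie_N, h.N_lie_a', h.N_lie_Λ, h.Λ_lie_N,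
      h.a_lie_Λ, h.Λ_lie_a, h.a'_lie_Λ, h.Λ_lie_a', h.a_lie_ΔG, h.ΔG_lie_a, h.a'_lie_ΔG,
      h.ΔG_lie_a', h.a_lie_ΔGS, h.ΔGS_lie_a, h.a'_lie_ΔGS, h.ΔGS_lie_a', h.ΔG_lie_N, h.N_lie_ΔG,
      h.N_lie_ΔGS, h.ΔGS_lie_N, h.ΔG_lie_ΔGS, h.ΔGS_lie_ΔG, h.ΔG_lie_Λ, h.Λ_lie_ΔG, h.ΔGS_lie_Λ,
      h.Λ_lie_ΔGS, neg_mem_iff] <;>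
    first
      | exact zero_mem _
      | exact smul_mem _ _ (subset_span (by simp [apply_pow_mem_powOrbit]))
      | exact subset_span (by simp [apply_pow_mem_powOrbit, apply_apply_pow_mem_powOrbit])

end WhiteNoiseRelations

theorem orbit_lie_algebra_solvable_general
    (A : Type*) [Ring A] [Algebra ℂ A]
    (E : Type*) [AddCommGroup E] [Module ℂ E]
    (B : E →ₗ[ℂ] E →ₗ[ℂ] ℂ) (S : E →ₗ[ℂ] E)
    (a a' : E →ₗ[ℂ] A) (N Λ ΔG ΔGS : A) (ζ : E)
    (r1 : ∀ ξ η : E, ⁅a ξ, a' η⁆ = (B ξ η) • (1 : A))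
    (r2 : ∀ ξ : E, ⁅a ξ, N⁆ = a ξ)
    (r3 : ∀ ξ : E, ⁅a' ξ, N⁆ = -(a' ξ))
    (r4 : ⁅N, Λ⁆ = 0)
    (r5 : ∀ ξ : E, ⁅a' ξ, Λ⁆ = a' (S ξ))
    (r6 : ∀ ξ : E, ⁅a ξ, Λ⁆ = -(a (S ξ)))
    (r7 : ∀ ξ : E, ⁅a ξ, ΔG⁆ = 0)
    (r8 : ∀ ξ : E, ⁅a' ξ, ΔG⁆ = -((2 : ℂ) • a ξ))
    (r9 : ∀ ξ : E, ⁅a' ξ, ΔGS⁆ = 0)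
    (r10 : ∀ ξ : E, ⁅a ξ, ΔGS⁆ = 0)
    (r11 : ⁅ΔG, N⁆ = (2 : ℂ) • ΔG)
    (r12 : ⁅N, ΔGS⁆ = -((2 : ℂ) • ΔGS))
    (r13 : ⁅ΔG, ΔGS⁆ = 0)
    (r14 : ⁅ΔG, Λ⁆ = (2 : ℂ) • ΔGS)
    (r15 : ⁅ΔGS, Λ⁆ = 0)
    (r16 : ∀ ξ η : E, ⁅a ξ, a η⁆ = 0)
    (r17 : ∀ ξ η : E, ⁅a' ξ, a' η⁆ = 0)
    (hset : Set A)
    (hhset : hset = ({1, N, Λ, ΔG, ΔGS} : Set A) ∪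
      Set.range (fun k : ℕ => a ((S ^ k) ζ)) ∪
      Set.range (fun k : ℕ => a' ((S ^ k) ζ)))
    (D1 : Submodule ℂ A)
    (hD1 : D1 = Submodule.span ℂ (Set.image2 (fun x y => ⁅x, y⁆)
      ((Submodule.span ℂ hset : Submodule ℂ A) : Set A)
      ((Submodule.span ℂ hset : Submodule ℂ A) : Set A)))
    (D2 : Submodule ℂ A)
    (hD2 : D2 = Submodule.span ℂ
      (Set.image2 (fun x y => ⁅x, y⁆) (D1 : Set A) (D1 : Set A)))
    (D3 : Submodule ℂ A)
    (hD3 : D3 = Submodule.span ℂ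
      (Set.image2 (fun x y => ⁅x, y⁆) (D2 : Set A) (D2 : Set A))) :
    D1 ≤ Submodule.span ℂ (({1, ΔG, ΔGS} : Set A) ∪
      Set.range (fun k : ℕ => a ((S ^ k) ζ)) ∪
      Set.range (fun k : ℕ => a' ((S ^ k) ζ))) ∧
    D2 ≤ Submodule.span ℂ (({1} : Set A) ∪
      Set.range (fun k : ℕ => a ((S ^ k) ζ))) ∧
    D3 = ⊥ := by
  subst hhset hD1 hD2 hD3
  let _ : LieRing A := LieRing.ofAssociativeRing
  have h : WhiteNoiseRelations B S a a' N Λ ΔG ΔGS :=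
    ⟨r1, r2, r3, r4, r5, r6, r7, r8, r9, r10, r11, r12, r13, r14, r15, r16, r17⟩
  have hD1 := span_image2_lie_le le_rfl le_rfl (h.lie_mem_span_fields_laplacians ζ)
  have hD2 := span_image2_lie_le hD1 hD1 (h.lie_mem_span_annihilators ζ)
  refine ⟨hD1, hD2, le_bot_iff.1 (span_image2_lie_le hD2 hD2 fun x hx y hy => ?_)⟩
  exact (mem_bot ℂ).2 (h.lie_eq_zero_of_mem_annihilators ζ x hx y hy)

/-- In the abstract white-noise setting, the Lie algebra
`h = span{Id, a(S^k ζ), a*(S^k ζ), N, Λ, Δ_G, Δ_G(S) : k ≥ 0}` is solvable: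
`h⁽¹⁾ ⊆ span{Id, a(S^k ζ), a*(S^k ζ), Δ_G, Δ_G(S)}`,
`h⁽²⁾ ⊆ span{Id, a(S^k ζ)}`, and `h⁽³⁾ = 0`. -/
theorem orbit_lie_algebra_solvable
    (A : Type*) [Ring A] [Algebra ℂ A]
    (E : Type*) [AddCommGroup E] [Module ℂ E]
    (B : E →ₗ[ℂ] E →ₗ[ℂ] ℂ) (S : E →ₗ[ℂ] E)
    (hSskew : ∀ ξ η : E, B (S ξ) η = - B ξ (S η))
    (a a' : E →ₗ[ℂ] A) (N Λ ΔG ΔGS : A) (ζ : E)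
    (hζ : B ζ ζ ≠ 0)
    (r1 : ∀ ξ η : E, ⁅a ξ, a' η⁆ = (B ξ η) • (1 : A))
    (r2 : ∀ ξ : E, ⁅a ξ, N⁆ = a ξ)
    (r3 : ∀ ξ : E, ⁅a' ξ, N⁆ = -(a' ξ))
    (r4 : ⁅N, Λ⁆ = 0)
    (r5 : ∀ ξ : E, ⁅a' ξ, Λ⁆ = a' (S ξ))
    (r6 : ∀ ξ : E, ⁅a ξ, Λ⁆ = -(a (S ξ)))
    (r7 : ∀ ξ : E, ⁅a ξ, ΔG⁆ = 0)
    (r8 : ∀ ξ : E, ⁅a' ξ, ΔG⁆ = -((2 : ℂ) • a ξ))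
    (r9 : ∀ ξ : E, ⁅a' ξ, ΔGS⁆ = 0)
    (r10 : ∀ ξ : E, ⁅a ξ, ΔGS⁆ = 0)
    (r11 : ⁅ΔG, N⁆ = (2 : ℂ) • ΔG)
    (r12 : ⁅N, ΔGS⁆ = -((2 : ℂ) • ΔGS))
    (r13 : ⁅ΔG, ΔGS⁆ = 0)
    (r14 : ⁅ΔG, Λ⁆ = (2 : ℂ) • ΔGS)
    (r15 : ⁅ΔGS, Λ⁆ = 0)
    (r16 : ∀ ξ η : E, ⁅a ξ, a η⁆ = 0)
    (r17 : ∀ ξ η : E, ⁅a' ξ, a' η⁆ = 0)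
    (hset : Set A)
    (hhset : hset = ({1, N, Λ, ΔG, ΔGS} : Set A) ∪
      Set.range (fun k : ℕ => a ((S ^ k) ζ)) ∪
      Set.range (fun k : ℕ => a' ((S ^ k) ζ)))
    (D1 : Submodule ℂ A)
    (hD1 : D1 = Submodule.span ℂ (Set.image2 (fun x y => ⁅x, y⁆)
      ((Submodule.span ℂ hset : Submodule ℂ A) : Set A)
      ((Submodule.span ℂ hset : Submodule ℂ A) : Set A)))
    (D2 : Submodule ℂ A)
    (hD2 : D2 = Submodule.span ℂ
      (Set.image2 (fun x y => ⁅x, y⁆) (D1 : Set A) (D1 : Set A)))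
    (D3 : Submodule ℂ A)
    (hD3 : D3 = Submodule.span ℂ
      (Set.image2 (fun x y => ⁅x, y⁆) (D2 : Set A) (D2 : Set A))) :
    D1 ≤ Submodule.span ℂ (({1, ΔG, ΔGS} : Set A) ∪
      Set.range (fun k : ℕ => a ((S ^ k) ζ)) ∪
      Set.range (fun k : ℕ => a' ((S ^ k) ζ))) ∧
    D2 ≤ Submodule.span ℂ (({1} : Set A) ∪
      Set.range (fun k : ℕ => a ((S ^ k) ζ))) ∧
    D3 = ⊥ :=
  orbit_lie_algebra_solvable_general A E B S a a' N Λ ΔG ΔGS ζ r1 r2 r3 r4 r5 r6 r7 r8 r9 r10 r11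
    r12 r13 r14 r15 r16 r17 hset hhset D1 hD1 D2 hD2 D3 hD3
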